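/- Every fully faithful and essentially surjective functor F : Γ → Ω between groupoids factors as F = H ∘ G, where G : Γ → Λ is an equivalence of groupoids admitting a strict retraction and H : Λ → Ω is a fully faithful functor which is surjective on objects. Here Λ is the groupoid with objects Λ₀ = {(γ, f) : γ ∈ Γ₀, f a morphism of Ω with source F(γ)} and morphisms Λ₁ = Λ₀ ×_{Ω₀} Ω₁ ×_{Ω₀} Λ₀. -/

import Mathlib

open CategoryTheory Function

variable {Γ Ω : Type*} [Groupoid Γ] [Groupoid Ω]

/-- The intermediate groupoid `Λ` of the factorization: objects are pairs `(γ, f)`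
with `γ` an object of `Γ` and `f` a morphism of `Ω` with source `F γ`; morphisms
`(γ, f) → (γ', f')` are morphisms `target f → target f'` of `Ω`, so that
`Λ₁ = Λ₀ ×_{Ω₀} Ω₁ ×_{Ω₀} Λ₀`. -/
structure FactGrpd (F : Γ ⥤ Ω) where
  pt : Γ
  tgt : Ω
  arr : F.obj pt ⟶ tgt

instance (F : Γ ⥤ Ω) : Groupoid (FactGrpd F) where
  Hom a b := a.tgt ⟶ b.tgt
  id a := 𝟙 a.tgt
  comp f g := f ≫ g
  inv f := Groupoid.inv f
  id_comp := by intros; simp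
  comp_id := by intros; simp
  assoc := by intros; simp
  inv_comp := by intros; exact Groupoid.inv_comp _
  comp_inv := by intros; exact Groupoid.comp_inv _

/-- The first factor `G : Γ ⥤ Λ`, `γ ↦ (γ, id_{F γ})`. -/
def factG (F : Γ ⥤ Ω) : Γ ⥤ FactGrpd F where
  obj γ := ⟨γ, F.obj γ, 𝟙 (F.obj γ)⟩
  map f := F.map f
  map_id := by intros; exact F.map_id _
  map_comp := by intros; exact F.map_comp _ _

/-- The second factor `H : Λ ⥤ Ω`, `(γ, f) ↦ target f`. -/
def factH (F : Γ ⥤ Ω) : FactGrpd F ⥤ Ω where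
  obj a := a.tgt
  map f := f
  map_id := by intros; rfl
  map_comp := by intros; rfl

/-!
Every object `(γ, f)` of `Λ` is isomorphic to `G γ = (γ, 𝟙)` through `f` itself, so `G` is
essentially surjective for any `F`; on morphisms `G` acts as `F`, so it is fully faithful
when `F` is. `H` is the identity on morphisms, and it is surjective on objects because every
`ω` receives an isomorphism from some `F γ`. Conjugating a morphism `(γ, f) ⟶ (γ', f')` by
`f` and `f'` gives a morphism `F γ ⟶ F γ'`, whose unique lift along `F` defines the strict
retraction of `G`.
-/

namespace FactGrpd

variable {F : Γ ⥤ Ω}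

@[simp]
lemma id_def (a : FactGrpd F) : 𝟙 a = 𝟙 a.tgt := rfl

@[simp]
lemma comp_def {a b c : FactGrpd F} (f : a ⟶ b) (g : b ⟶ c) :
    f ≫ g = @CategoryStruct.comp Ω _ a.tgt b.tgt c.tgt f g := rfl

def isoFactG (a : FactGrpd F) : (factG F).obj a.pt ≅ a where
  hom := a.arr
  inv := Groupoid.inv a.arr
  hom_inv_id := Groupoid.comp_inv a.arr
  inv_hom_id := Groupoid.inv_comp a.arr

end FactGrpd

variable (F : Γ ⥤ Ω)

lemma factG_comp_factH : factG F ⋙ factH F = F := rfl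

def fullyFaithfulFactH : (factH F).FullyFaithful where
  preimage f := f

lemma factH_obj_surjective [F.EssSurj] : Surjective (factH F).obj := fun ω =>
  ⟨⟨F.objPreimage ω, ω, (F.objObjPreimageIso ω).hom⟩, rfl⟩

instance factG_essSurj : (factG F).EssSurj where
  mem_essImage a := ⟨a.pt, ⟨a.isoFactG⟩⟩

variable {F}

def fullyFaithfulFactG (hF : F.FullyFaithful) : (factG F).FullyFaithful where
  preimage f := hF.preimage f
  map_preimage f := hF.map_preimage f
  preimage_map f := hF.preimage_map f

lemma factG_isEquivalence (hF : F.FullyFaithful) : (factG F).IsEquivalence where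
  full := (fullyFaithfulFactG hF).full
  faithful := (fullyFaithfulFactG hF).faithful

def factRetraction (hF : F.FullyFaithful) : FactGrpd F ⥤ Γ where
  obj a := a.pt
  map {a b} f := hF.preimage (a.arr ≫ f ≫ Groupoid.inv b.arr)
  map_id a := hF.map_injective (by simp)
  map_comp f g := hF.map_injective (by simp)

lemma factG_comp_factRetraction (hF : F.FullyFaithful) :
    factG F ⋙ factRetraction hF = 𝟭 Γ :=
  CategoryTheory.Functor.ext (fun _ => rfl) fun γ γ' f => by
    show hF.preimage (𝟙 _ ≫ F.map f ≫ Groupoid.inv (𝟙 _)) = 𝟙 γ ≫ f ≫ 𝟙 γ'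
    simp

/-- Every fully faithful and essentially surjective functor `F : Γ ⥤ Ω` between
groupoids factors as `F = G ⋙ H` where `H` is fully faithful and surjective on
objects, and `G` is an equivalence admitting a strict retraction (a functor `P` with
`G ⋙ P = 𝟭 Γ`). -/
theorem factorization_of_weak_equivalence (F : Γ ⥤ Ω)
    (hfull : F.Full) (hfaithful : F.Faithful) (hes : F.EssSurj) :
    factG F ⋙ factH F = F ∧
      (factH F).Full ∧ (factH F).Faithful ∧ Surjective (factH F).obj ∧
      (factG F).IsEquivalence ∧ ∃ P : FactGrpd F ⥤ Γ, factG F ⋙ P = 𝟭 Γ := by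
  have hF : F.FullyFaithful := .ofFullyFaithful F
  exact ⟨factG_comp_factH F, (fullyFaithfulFactH F).full, (fullyFaithfulFactH F).faithful,
    factH_obj_surjective F, factG_isEquivalence hF, factRetraction hF,
    factG_comp_factRetraction hF⟩
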